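/- arXiv:1801.06278 — 5 statements merged into one kernel-verified Lean document; each statement's English description precedes it below -/
import Mathlib

section
/- For θ ∈ ℝ, the Jacobian of f_z(x,y,θ) = (θ, x cos θ + y sin θ, x sin θ - y cos θ) multiplied by the matrix Q(q) with rows (cos θ, 0), (sin θ, 0), (0, 1) equals the matrix Q_z(z) with rows (0, 1), (1, -z3), (0, z2), where z = f_z(x,y,θ). -/
open Real Matrix

/-- The Jacobian of `f_z(x,y,θ) = (θ, x cos θ + y sin θ, x sin θ - y cos θ)`
multiplied by `Q(q)` equals `Q_z(z)` with `z2 = x cos θ + y sin θ`,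
`z3 = x sin θ - y cos θ`. -/
theorem stmt_3 (x y θ : ℝ) :
    (!![(0 : ℝ), 0, 1;
        cos θ, sin θ, -(x * sin θ - y * cos θ);
        sin θ, -cos θ, x * cos θ + y * sin θ]) *
      (!![cos θ, (0 : ℝ); sin θ, 0; 0, 1]) =
    !![(0 : ℝ), 1;
       1, -(x * sin θ - y * cos θ);
       0, x * cos θ + y * sin θ] := by
  have h := sin_sq_add_cos_sq θ
  ext i j
  fin_cases i <;> fin_cases j <;> simp [Matrix.mul_apply, Fin.sum_univ_succ] <;> nlinarith [sin_sq_add_cos_sq θ]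
end

section
/- Let w1 = z1, w2 = z2/z1 - 2·z3/z1², w3 = 2·z3/z1² for z1 ≠ 0, and consider the Jacobian matrix J(w) with rows (1, w2+w3, w1·w3), (0, w1, 0), (0, w1, (1/2)·w1²) (the transpose of ∂f_w⁻¹/∂w). If L = diag(l1, l2, l3) with l1, l2, l3 > 0, w1 ≠ 0, and L·w = J(w)·(-w1·w2 - w1·w3, 0, 1)ᵀ·a for some scalar a, then w1 = 0, a contradiction; hence no w with w1 ≠ 0 satisfies this equation. -/
/-- Algebraic core of the no-invariant-set lemma: the componentwise equations of
`L·w = (∂f_w⁻¹/∂w)ᵀ · Q_z^⊥ᵀ · a` have no solution with `w1 ≠ 0`. -/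
theorem stmt_8 (l1 l2 l3 w1 w2 w3 a : ℝ)
    (hl1 : 0 < l1) (hl2 : 0 < l2) (hl3 : 0 < l3) (hw1 : w1 ≠ 0)
    (e1 : l1 * w1 = (1 * (-w1 * w2 - w1 * w3) + (w2 + w3) * 0 + w1 * w3 * 1) * a)
    (e2 : l2 * w2 = (0 * (-w1 * w2 - w1 * w3) + w1 * 0 + 0 * 1) * a)
    (e3 : l3 * w3 = (0 * (-w1 * w2 - w1 * w3) + w1 * 0 + (1 / 2) * w1 ^ 2 * 1) * a) :
    False := by
  have hw2 : w2 = 0 := by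
    have : l2 * w2 = 0 := by linarith [e2]
    exact (mul_eq_zero.mp this).resolve_left hl2.ne' 
  have h1 : l1 * w1 = 0 := by
    rw [hw2] at e1; ring_nf at e1 ⊢; linarith
  exact hw1 ((mul_eq_zero.mp h1).resolve_left hl1.ne')
end

section
/- Let H : [0, ∞) → ℝ be differentiable, bounded below by 0, and suppose w1 : [0, ∞) → ℝ is C¹ with w1(t) > 0 on [0, T), lim_{t→T} w1(t) = 0 for some finite T > 0, and H'(t) ≤ -(k/w1(t)²)·(w1'(t))² for all t ∈ [0,T) with k > 0. Then for any t1 ∈ [0, T), choosing t' ∈ [t1, T] where w1 attains its maximum on [t1, T], we have H(T) - H(t') ≤ -k/(T - t'). Consequently no such T exists: w1 cannot reach zero in finite time. -/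
open Filter Set

/-!
With `q = w'/w = (log w)'`, the dissipation inequality reads `H' ≤ -k q²`, and
`-k q² ≤ k q + k/4` because `k (q + 1/2)² ≥ 0`. Hence `H - k log w - k t/4` is nonincreasing,
and since `H ≥ 0` this bounds `log w` from below on any bounded interval: `w` stays above a
positive constant on `[0, T)`, so it cannot tend to `0` as `t → T`.
-/

section Dissipation

variable {D : Set ℝ} {H w : ℝ → ℝ} {k : ℝ}

theorem antitoneOn_sub_mul_log_sub_of_deriv_le (hD : Convex ℝ D)
    (hHc : ContinuousOn H D) (hwc : ContinuousOn w D)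
    (hHd : DifferentiableOn ℝ H (interior D)) (hwd : DifferentiableOn ℝ w (interior D))
    (hpos : ∀ t ∈ D, 0 < w t) (hk : 0 ≤ k)
    (hdiss : ∀ t ∈ interior D, deriv H t ≤ -(k / w t ^ 2) * deriv w t ^ 2) :
    AntitoneOn (fun t => H t - k * Real.log (w t) - k / 4 * t) D := by
  have hderiv : ∀ t ∈ interior D, HasDerivAt (fun t => H t - k * Real.log (w t) - k / 4 * t)
      (deriv H t - k * (deriv w t / w t) - k / 4 * 1) t := fun t ht => by
    have hnhds := isOpen_interior.mem_nhds ht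
    have hwt : w t ≠ 0 := (hpos t (interior_subset ht)).ne'
    exact (((hHd.differentiableAt hnhds).hasDerivAt.sub
      (((hwd.differentiableAt hnhds).hasDerivAt.log hwt).const_mul k)).sub
      ((hasDerivAt_id t).const_mul (k / 4)))
  refine antitoneOn_of_deriv_nonpos hD ?_
    (fun t ht => (hderiv t ht).differentiableAt.differentiableWithinAt) ?_
  · exact (hHc.sub (continuousOn_const.mul
      (hwc.log fun t ht => (hpos t ht).ne'))).sub (continuousOn_const.mul continuousOn_id)
  · intro t ht
    rw [(hderiv t ht).deriv]
    have hwt : w t ≠ 0 := (hpos t (interior_subset ht)).ne'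
    have hdiss_t : deriv H t ≤ -k * (deriv w t / w t) ^ 2 := by
      convert hdiss t ht using 1
      field_simp
    nlinarith [mul_nonneg hk (sq_nonneg (deriv w t / w t + 1 / 2))]

theorem mul_exp_le_of_deriv_le (hD : Convex ℝ D)
    (hHc : ContinuousOn H D) (hwc : ContinuousOn w D)
    (hHd : DifferentiableOn ℝ H (interior D)) (hwd : DifferentiableOn ℝ w (interior D))
    (hpos : ∀ t ∈ D, 0 < w t) (hH0 : ∀ t ∈ D, 0 ≤ H t) (hk : 0 < k)
    (hdiss : ∀ t ∈ interior D, deriv H t ≤ -(k / w t ^ 2) * deriv w t ^ 2)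
    {a t : ℝ} (ha : a ∈ D) (ht : t ∈ D) (hat : a ≤ t) :
    w a * Real.exp (-(H a / k) - (t - a) / 4) ≤ w t := by
  have hmono := antitoneOn_sub_mul_log_sub_of_deriv_le hD hHc hwc hHd hwd hpos hk.le hdiss
    ha ht hat
  have hlog : Real.log (w a) + (-(H a / k) - (t - a) / 4) ≤ Real.log (w t) := by
    have hHt := hH0 t ht
    rw [← mul_le_mul_iff_of_pos_left hk, mul_add, mul_sub, mul_neg, mul_div_cancel₀ _ hk.ne']
    simp only at hmono
    linarith
  calc w a * Real.exp (-(H a / k) - (t - a) / 4)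
      = Real.exp (Real.log (w a) + (-(H a / k) - (t - a) / 4)) := by
        rw [Real.exp_add, Real.exp_log (hpos a ha)]
    _ ≤ Real.exp (Real.log (w t)) := Real.exp_le_exp.2 hlog
    _ = w t := Real.exp_log (hpos t ht)

end Dissipation

/-- Finite-time non-escape (Lemma 2): if `H` is differentiable and bounded below
by `0` on `[0,∞)`, `w1` is `C¹` and positive on `[0,T)` with `w1(t) → 0` as
`t → T` for some finite `T > 0`, and `H' ≤ -(k/w1²)·(w1')²` on `[0,T)` with
`k > 0`, then a contradiction follows: `w1` cannot reach zero in finite time. -/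
theorem stmt_10 (H w1 : ℝ → ℝ) (k T : ℝ) (hk : 0 < k) (hT : 0 < T)
    (hH : Differentiable ℝ H) (hH0 : ∀ t, 0 ≤ t → 0 ≤ H t)
    (hw1 : ContDiff ℝ 1 w1)
    (hpos : ∀ t, 0 ≤ t → t < T → 0 < w1 t)
    (hlim : Tendsto w1 (nhdsWithin T (Iio T)) (nhds 0))
    (hdiss : ∀ t, 0 ≤ t → t < T →
      deriv H t ≤ -(k / (w1 t) ^ 2) * (deriv w1 t) ^ 2) :
    False := by
  have hw1d : Differentiable ℝ w1 := hw1.differentiable one_ne_zero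
  have h0 : (0 : ℝ) ∈ Ico 0 T := ⟨le_rfl, hT⟩
  have hbound : ∀ t ∈ Ico 0 T, w1 0 * Real.exp (-(H 0 / k) - T / 4) ≤ w1 t := fun t ht => by
    refine le_trans ?_ (mul_exp_le_of_deriv_le (convex_Ico 0 T) hH.continuous.continuousOn
      hw1d.continuous.continuousOn hH.differentiableOn hw1d.differentiableOn
      (fun s hs => hpos s hs.1 hs.2) (fun s hs => hH0 s hs.1) hk
      (fun s hs => by rw [interior_Ico] at hs; exact hdiss s hs.1.le hs.2) h0 ht ht.1)
    gcongr
    · exact (hpos 0 le_rfl hT).le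
    · linarith [ht.2]
  have hle : w1 0 * Real.exp (-(H 0 / k) - T / 4) ≤ 0 :=
    ge_of_tendsto hlim (mem_of_superset (Ico_mem_nhdsLT hT) hbound)
  exact hle.not_gt (mul_pos (hpos 0 le_rfl hT) (Real.exp_pos _))
end

section
/- Let k > 0 and let w : [0,T) → ℝ be C¹ with w(t) ≠ 0 for all t ∈ [0,T), and suppose ∫_0^t (k/w(s)²)·(w'(s))² ds ≤ C for all t < T and some constant C. If additionally |w'| is bounded on [0,T) so that lim_{t→T} w(t) exists, then lim_{t→T} w(t) ≠ 0. -/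
open Filter Set intervalIntegral MeasureTheory

/-!
Since `(log |w|)' = w'/w` and `|x| ≤ (1 + x²)/2`, on `[0, t]` the drop of `log |w|` is at most
`(t + (1/k) ∫₀ᵗ (k/w²) w'²) / 2 ≤ (T + C/k) / 2`. Hence `log |w|` stays bounded below on
`[0, T)`, while it would tend to `-∞` if `w(t) → 0` as `t → T⁻`.
-/

theorem abs_le_one_add_sq_div_two (x : ℝ) : |x| ≤ (1 + x ^ 2) / 2 := by
  nlinarith [sq_nonneg (|x| - 1), sq_abs x]

theorem Filter.Tendsto.log_atBot {α : Type*} {l : Filter α} {f : α → ℝ}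
    (hf : Tendsto f l (nhds 0)) (hne : ∀ᶠ x in l, f x ≠ 0) :
    Tendsto (fun x => Real.log (f x)) l atBot :=
  Real.tendsto_log_nhdsNE_zero.comp (tendsto_nhdsWithin_iff.mpr ⟨hf, hne⟩)

section LogDrop

variable {w : ℝ → ℝ} {a b : ℝ}

theorem ContDiff.continuousOn_deriv_div_self {S : Set ℝ} (hw : ContDiff ℝ 1 w)
    (hne : ∀ s ∈ S, w s ≠ 0) : ContinuousOn (fun s => deriv w s / w s) S :=
  hw.continuous_deriv_one.continuousOn.div hw.continuous.continuousOn hne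

-- `Real.log` is `log |·|`, so this holds whatever the sign of `w`.
theorem log_sub_log_le_integral_abs_deriv_div (hw : ContDiff ℝ 1 w) (hab : a ≤ b)
    (hne : ∀ s ∈ Icc a b, w s ≠ 0) :
    Real.log (w a) - Real.log (w b) ≤ ∫ s in a..b, |deriv w s / w s| := by
  rw [← uIcc_of_le hab] at hne
  have hderiv : ∀ s ∈ uIcc a b, HasDerivAt (fun x => Real.log (w x)) (deriv w s / w s) s :=
    fun s hs => ((hw.differentiable one_ne_zero s).hasDerivAt).log (hne s hs)
  have hftc := integral_eq_sub_of_hasDerivAt hderiv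
    (hw.continuousOn_deriv_div_self hne).intervalIntegrable
  calc Real.log (w a) - Real.log (w b) = -∫ s in a..b, deriv w s / w s := by rw [hftc]; ring
    _ ≤ |∫ s in a..b, deriv w s / w s| := neg_le_abs _
    _ ≤ ∫ s in a..b, |deriv w s / w s| := abs_integral_le_integral_abs hab

theorem integral_abs_deriv_div_le {k : ℝ} (hk : 0 < k) (hw : ContDiff ℝ 1 w) (hab : a ≤ b)
    (hne : ∀ s ∈ Icc a b, w s ≠ 0) :
    ∫ s in a..b, |deriv w s / w s|
      ≤ ((b - a) + (∫ s in a..b, (k / (w s) ^ 2) * (deriv w s) ^ 2) / k) / 2 := by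
  have hne' : ∀ s ∈ uIcc a b, w s ≠ 0 := uIcc_of_le hab ▸ hne
  have hint : IntervalIntegrable (fun s => (k / (w s) ^ 2) * (deriv w s) ^ 2) volume a b :=
    ((continuousOn_const.div (hw.continuous.continuousOn.pow 2)
      fun s hs => pow_ne_zero 2 (hne' s hs)).mul
      (hw.continuous_deriv_one.continuousOn.pow 2)).intervalIntegrable
  have hpoint : ∀ s ∈ Icc a b,
      |deriv w s / w s| ≤ 1 / 2 + (2 * k)⁻¹ * ((k / (w s) ^ 2) * (deriv w s) ^ 2) := by
    intro s hs
    have hws := hne s hs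
    calc |deriv w s / w s| ≤ (1 + (deriv w s / w s) ^ 2) / 2 := abs_le_one_add_sq_div_two _
      _ = _ := by field_simp
  calc ∫ s in a..b, |deriv w s / w s|
      ≤ ∫ s in a..b, 1 / 2 + (2 * k)⁻¹ * ((k / (w s) ^ 2) * (deriv w s) ^ 2) := by
        exact integral_mono_on hab (hw.continuousOn_deriv_div_self hne').intervalIntegrable.abs
          (intervalIntegrable_const.add (hint.const_mul _)) hpoint
    _ = _ := by
        rw [integral_add intervalIntegrable_const (hint.const_mul _),
          intervalIntegral.integral_const, intervalIntegral.integral_const_mul]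
        simp only [smul_eq_mul]
        field_simp

end LogDrop

theorem stmt_11_general (k T C l : ℝ) (hk : 0 < k) (hT : 0 < T) (w : ℝ → ℝ)
    (hw : ContDiff ℝ 1 w)
    (hne : ∀ t, 0 ≤ t → t < T → w t ≠ 0)
    (hint : ∀ t, 0 ≤ t → t < T →
      (∫ s in (0 : ℝ)..t, (k / (w s) ^ 2) * (deriv w s) ^ 2) ≤ C)
    (hlim : Tendsto w (nhdsWithin T (Iio T)) (nhds l)) :
    l ≠ 0 := by
  rintro rfl
  have hbelow : ∀ t ∈ Ioo 0 T, Real.log (w 0) - (T + C / k) / 2 ≤ Real.log (w t) := by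
    intro t ⟨ht0, htT⟩
    have hne' : ∀ s ∈ Icc 0 t, w s ≠ 0 := fun s hs => hne s hs.1 (hs.2.trans_lt htT)
    have hdrop := (log_sub_log_le_integral_abs_deriv_div hw ht0.le hne').trans
      (integral_abs_deriv_div_le hk hw ht0.le hne')
    have hC := div_le_div_of_nonneg_right (hint t ht0.le htT) hk.le
    linarith
  have hnear : Ioo 0 T ∈ nhdsWithin T (Iio T) := Ioo_mem_nhdsLT hT
  have hlog := hlim.log_atBot (Filter.mem_of_superset hnear fun t ht => hne t ht.1.le ht.2)
  obtain ⟨t, hlt, ht⟩ :=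
    ((hlog.eventually (eventually_lt_atBot (Real.log (w 0) - (T + C / k) / 2))).and hnear).exists
  exact (hbelow t ht).not_gt hlt

/-- Abstract positive-invariance lemma: if the weighted dissipation integral
`∫ (k/w²)(w')²` stays bounded on `[0,T)` and `w(t) → l` as `t → T`, then
`l ≠ 0`. -/
theorem stmt_11 (k T C l : ℝ) (hk : 0 < k) (hT : 0 < T) (w : ℝ → ℝ)
    (hw : ContDiff ℝ 1 w)
    (hne : ∀ t, 0 ≤ t → t < T → w t ≠ 0)
    (hint : ∀ t, 0 ≤ t → t < T →
      (∫ s in (0 : ℝ)..t, (k / (w s) ^ 2) * (deriv w s) ^ 2) ≤ C)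
    (hbd : ∃ B, ∀ t, 0 ≤ t → t < T → |deriv w t| ≤ B)
    (hlim : Tendsto w (nhdsWithin T (Iio T)) (nhds l)) :
    l ≠ 0 :=
  stmt_11_general k T C l hk hT w hw hne hint hlim
end

section
/- If p = 0 and ṗ = 0 along a solution of the closed-loop Chaplygin sleigh, then the configuration satisfies Q_wᵀ(w) L w = 0, which for w1 ≠ 0 and L = diag(l1,l2,l3) positive diagonal implies first w2 = 0 and then w1 = 0; hence no solution with w1 ≠ 0 can keep p ≡ 0. -/
/-- If `p = 0` and `ṗ = 0` then `Q_wᵀ(w) L w = 0`, whose components (for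
`w1 ≠ 0` and positive diagonal `L`) force first `w2 = 0` and then `w1 = 0`,
a contradiction. -/
theorem stmt_16 (l1 l2 l3 w1 w2 w3 : ℝ)
    (hl1 : 0 < l1) (hl2 : 0 < l2) (hl3 : 0 < l3) (hw1 : w1 ≠ 0)
    (hcol1 : 0 * (l1 * w1) + 1 * (l2 * w2) + 0 * (l3 * w3) = 0)
    (hcol2 : 1 * (l1 * w1) +
      (-2 * w2 / w1 - w3 - (1 / 2) * w1 ^ 2 * w3) * (l2 * w2) +
      (2 * w2 / w1 ^ 2) * (l3 * w3) = 0) :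
    False := by
  have hw2 : w2 = 0 := by
    have := hcol1
    have h := mul_eq_zero.mp (by linarith : l2 * w2 = 0)
    rcases h with h | h
    · exact absurd h hl2.ne'
    · exact h
  subst hw2
  simp at hcol2
  rcases hcol2 with h | h
  · exact hl1.ne' h
  · exact hw1 h
end
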